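/- Let K_{α,β}(x) = |x|^{-α} log^{β}(1+|x|) with 0 ≤ α ≤ N, β ≤ 0 and β > α − N. If f ∈ L¹_loc(ℝᴺ) is nonnegative and satisfies f(x) ≥ c|x|^{-N} for |x| ≥ 1 (some c > 0), then there exists C > 0 such that (K_{α,β} * f)(x) ≥ C |x|^{-α} log^{1+β}(1+|x|) for all |x| ≥ 1. -/

import Mathlib

open MeasureTheory Real
open scoped ENNReal

noncomputable def lap {N : ℕ} (f : EuclideanSpace ℝ (Fin N) → ℝ) (x : EuclideanSpace ℝ (Fin N)) : ℝ :=
  ∑ i, iteratedFDeriv ℝ 2 f x ![EuclideanSpace.single i 1, EuclideanSpace.single i 1]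

noncomputable def Kab {N : ℕ} (α β : ℝ) (x : EuclideanSpace ℝ (Fin N)) : ℝ :=
  ‖x‖ ^ (-α) * (Real.log (1 + ‖x‖)) ^ β

noncomputable def convK {N : ℕ} (α β : ℝ) (f : EuclideanSpace ℝ (Fin N) → ℝ)
    (x : EuclideanSpace ℝ (Fin N)) : ℝ :=
  ∫ y, Kab α β (x - y) * f y

noncomputable def convKL {N : ℕ} (α β : ℝ) (f : EuclideanSpace ℝ (Fin N) → ℝ)
    (x : EuclideanSpace ℝ (Fin N)) : ℝ≥0∞ :=
  ∫⁻ y, ENNReal.ofReal (Kab α β (x - y) * f y)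

/-!
Split the ball of radius `2‖x‖` into the dyadic shells `2ᵏ < ‖y‖ < 2ᵏ⁺¹`, `k = 0, …, m`, where
`2ᵐ ≤ ‖x‖ < 2ᵐ⁺¹`. On each shell `‖x - y‖ ≤ 3‖x‖`, and since the profile `t ↦ t^(-α) log^β (1 + t)`
is decreasing and loses at most a constant factor under `t ↦ 3t`, the kernel is at least a constant
times `K_{α,β}(x)`. The tail bound `f ≥ c ‖y‖^(-N)` gives each shell an `f`-mass of at least a
constant, so the convolution is at least `(m + 1) K_{α,β}(x) ≳ log (1 + ‖x‖) K_{α,β}(x)`.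
-/

open Metric Module Set

section RadialProfile

variable {α β : ℝ}

lemma log_one_add_nat_mul_le (n : ℕ) {t : ℝ} (ht : 0 ≤ t) :
    log (1 + n * t) ≤ n * log (1 + t) := by
  rw [← Real.log_pow]
  exact log_le_log (by positivity) (one_add_mul_le_pow (by linarith) n)

lemma antitoneOn_rpow_neg_mul_log_one_add_rpow (hα : 0 ≤ α) (hβ : β ≤ 0) :
    AntitoneOn (fun t : ℝ => t ^ (-α) * log (1 + t) ^ β) (Ioi 0) := by
  intro s (hs : 0 < s) t (ht : 0 < t) hst
  have hlog : 0 < log (1 + s) := log_pos (by linarith)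
  exact mul_le_mul (rpow_le_rpow_of_nonpos hs hst (by linarith))
    (rpow_le_rpow_of_nonpos hlog (log_le_log (by linarith) (by linarith)) hβ)
    (rpow_nonneg (log_nonneg (by linarith)) _) (by positivity)

lemma nat_rpow_mul_le_rpow_neg_mul_log_one_add_rpow (hβ : β ≤ 0) {n : ℕ} (hn : 1 ≤ n)
    {t : ℝ} (ht : 0 < t) :
    (n : ℝ) ^ (-α) * n ^ β * (t ^ (-α) * log (1 + t) ^ β)
      ≤ (n * t) ^ (-α) * log (1 + n * t) ^ β := by
  have hn' : (1 : ℝ) ≤ n := by exact_mod_cast hn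
  have hlog : 0 < log (1 + n * t) := log_pos (by nlinarith)
  calc (n : ℝ) ^ (-α) * n ^ β * (t ^ (-α) * log (1 + t) ^ β)
      = (n * t) ^ (-α) * (n * log (1 + t)) ^ β := by
        rw [mul_rpow (by positivity) ht.le, mul_rpow (by positivity) (log_pos (by linarith)).le]
        ring
    _ ≤ (n * t) ^ (-α) * log (1 + n * t) ^ β := by
        gcongr (n * t) ^ (-α) * ?_
        exact rpow_le_rpow_of_nonpos hlog (log_one_add_nat_mul_le n ht.le) hβ

lemma log_one_add_le_of_lt_two_pow {X : ℝ} (hX : 1 ≤ X) {m : ℕ} (hm : X < 2 ^ (m + 1)) :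
    log (1 + X) ≤ 2 * (m + 1) * log 2 := by
  have hlog2 : 0 < log 2 := log_pos one_lt_two
  calc log (1 + X) ≤ log (2 ^ (m + 2)) := log_le_log (by linarith) (by rw [pow_succ]; linarith)
    _ = (m + 2) * log 2 := by rw [Real.log_pow]; push_cast; ring
    _ ≤ 2 * (m + 1) * log 2 := by gcongr; linarith [(m.cast_nonneg : (0 : ℝ) ≤ m)]

end RadialProfile

section Kernel

variable {N : ℕ} {α β : ℝ}

lemma Kab_nonneg (x : EuclideanSpace ℝ (Fin N)) : 0 ≤ Kab α β x :=
  mul_nonneg (rpow_nonneg (norm_nonneg x) _) (rpow_nonneg (log_nonneg (by simp)) _)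

lemma three_rpow_mul_Kab_le_Kab_sub (hα : 0 ≤ α) (hβ : β ≤ 0) {x y : EuclideanSpace ℝ (Fin N)}
    (hx : x ≠ 0) (hyx : y ≠ x) (hy : ‖y‖ ≤ 2 * ‖x‖) :
    3 ^ (-α) * 3 ^ β * Kab α β x ≤ Kab α β (x - y) := by
  have hx0 : 0 < ‖x‖ := norm_pos_iff.mpr hx
  have hxy : ‖x - y‖ ≤ 3 * ‖x‖ := by linarith [norm_sub_le x y]
  calc 3 ^ (-α) * 3 ^ β * Kab α β x
      ≤ (3 * ‖x‖) ^ (-α) * log (1 + 3 * ‖x‖) ^ β := by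
        exact_mod_cast nat_rpow_mul_le_rpow_neg_mul_log_one_add_rpow hβ (by norm_num : 1 ≤ 3) hx0
    _ ≤ Kab α β (x - y) :=
        antitoneOn_rpow_neg_mul_log_one_add_rpow hα hβ (norm_pos_iff.mpr (sub_ne_zero.mpr hyx.symm))
          (by simp only [mem_Ioi]; positivity) hxy

lemma div_mul_rpow_log_le_nat_mul_Kab {κ : ℝ} (hκ : 0 ≤ κ) {x : EuclideanSpace ℝ (Fin N)}
    (hx : 1 ≤ ‖x‖) {m : ℕ} (hm : ‖x‖ < 2 ^ (m + 1)) :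
    κ / (2 * log 2) * (‖x‖ ^ (-α) * log (1 + ‖x‖) ^ (1 + β))
      ≤ ((m + 1 : ℕ) : ℝ) * (κ * Kab α β x) := by
  have hL : 0 < log (1 + ‖x‖) := log_pos (by linarith)
  have hcount : log (1 + ‖x‖) / (2 * log 2) ≤ ((m + 1 : ℕ) : ℝ) := by
    rw [div_le_iff₀ (by positivity [log_pos one_lt_two])]
    push_cast
    linarith [log_one_add_le_of_lt_two_pow hx hm]
  calc κ / (2 * log 2) * (‖x‖ ^ (-α) * log (1 + ‖x‖) ^ (1 + β))
      = κ * Kab α β x * (log (1 + ‖x‖) / (2 * log 2)) := by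
        rw [rpow_add hL, rpow_one, Kab]; ring
    _ ≤ κ * Kab α β x * ((m + 1 : ℕ) : ℝ) :=
        mul_le_mul_of_nonneg_left hcount (mul_nonneg hκ (Kab_nonneg x))
    _ = ((m + 1 : ℕ) : ℝ) * (κ * Kab α β x) := mul_comm _ _

end Kernel
section DyadicShells

variable {E : Type*} [SeminormedAddCommGroup E]

lemma pairwiseDisjoint_dyadic_shells (s : Set ℕ) :
    s.PairwiseDisjoint fun k => ball (0 : E) (2 * 2 ^ k) \ closedBall 0 (2 ^ k) := by
  refine ((pairwise_disjoint_on _).2 fun j k hjk => ?_).set_pairwise s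
  refine Set.disjoint_left.2 fun y ⟨hyj, _⟩ ⟨_, hyk⟩ => hyk (mem_closedBall_zero_iff.2 ?_)
  calc ‖y‖ ≤ 2 * 2 ^ j := (mem_ball_zero_iff.1 hyj).le
    _ = 2 ^ (j + 1) := by ring
    _ ≤ 2 ^ k := pow_le_pow_right₀ one_le_two hjk

variable [MeasurableSpace E] [OpensMeasurableSpace E]

lemma sum_setLIntegral_dyadic_shells_le (μ : Measure E) (g : E → ℝ≥0∞) (m : ℕ) :
    ∑ k ∈ Finset.range m, ∫⁻ y in ball 0 (2 * 2 ^ k) \ closedBall 0 (2 ^ k), g y ∂μ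
      ≤ ∫⁻ y, g y ∂μ := by
  rw [← lintegral_biUnion_finset (pairwiseDisjoint_dyadic_shells _)
    (fun _ _ => measurableSet_ball.diff measurableSet_closedBall)]
  exact setLIntegral_le_lintegral _ _

end DyadicShells

section HaarShells

variable {E : Type*} [NormedAddCommGroup E] [NormedSpace ℝ E] [MeasurableSpace E] [BorelSpace E]
  [FiniteDimensional ℝ E] [Nontrivial E] (μ : Measure E) [μ.IsAddHaarMeasure]

lemma addHaar_ball_diff_closedBall {r R : ℝ} (hr : 0 ≤ r) (hrR : r < R) :
    μ (ball (0 : E) R \ closedBall 0 r)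
      = ENNReal.ofReal (R ^ finrank ℝ E - r ^ finrank ℝ E) * μ (ball 0 1) := by
  rw [measure_sdiff (closedBall_subset_ball hrR) measurableSet_closedBall.nullMeasurableSet
      measure_closedBall_lt_top.ne,
    Measure.addHaar_ball _ _ (hr.trans hrR.le), Measure.addHaar_closedBall _ _ hr,
    ENNReal.ofReal_sub _ (by positivity), ENNReal.sub_mul fun _ _ => measure_ball_lt_top.ne]

lemma ofReal_mul_addHaar_ball_le_setLIntegral_shell {f : E → ℝ} {c r : ℝ} (hc : 0 ≤ c)
    (hr : 1 ≤ r) (hf : ∀ y : E, 1 ≤ ‖y‖ → c * ‖y‖ ^ (-(finrank ℝ E : ℝ)) ≤ f y) :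
    ENNReal.ofReal (c / 2) * μ (ball 0 1)
      ≤ ∫⁻ y in ball 0 (2 * r) \ closedBall 0 r, ENNReal.ofReal (f y) ∂μ := by
  set n := finrank ℝ E
  have hn : 1 ≤ n := finrank_pos
  have hr0 : 0 < r := by linarith
  have hmass : c / 2 ≤ c * (2 * r) ^ (-(n : ℝ)) * ((2 * r) ^ n - r ^ n) := by
    have h2n : (2 : ℝ) ≤ 2 ^ n := by simpa using pow_le_pow_right₀ one_le_two hn
    rw [rpow_neg (by positivity), rpow_natCast, mul_pow]
    field_simp
    nlinarith [pow_pos hr0 n]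
  calc ENNReal.ofReal (c / 2) * μ (ball 0 1)
      ≤ ENNReal.ofReal (c * (2 * r) ^ (-(n : ℝ)))
          * (ENNReal.ofReal ((2 * r) ^ n - r ^ n) * μ (ball 0 1)) := by
        rw [← mul_assoc, ← ENNReal.ofReal_mul (by positivity)]
        gcongr
    _ = ∫⁻ _ in ball 0 (2 * r) \ closedBall 0 r, ENNReal.ofReal (c * (2 * r) ^ (-(n : ℝ))) ∂μ := by
        rw [setLIntegral_const, addHaar_ball_diff_closedBall μ hr0.le (by linarith)]
    _ ≤ ∫⁻ y in ball 0 (2 * r) \ closedBall 0 r, ENNReal.ofReal (f y) ∂μ := by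
        refine setLIntegral_mono' (measurableSet_ball.diff measurableSet_closedBall) fun y hy => ?_
        have hy1 : ‖y‖ < 2 * r := mem_ball_zero_iff.1 hy.1
        have hy2 : r < ‖y‖ := lt_of_not_ge fun h => hy.2 (mem_closedBall_zero_iff.2 h)
        refine ENNReal.ofReal_le_ofReal
          ((mul_le_mul_of_nonneg_left ?_ hc).trans (hf y (by linarith)))
        exact rpow_le_rpow_of_nonpos (by linarith) hy1.le (neg_nonpos.2 n.cast_nonneg)

end HaarShells

lemma ofReal_le_setLIntegral_shell_Kab_mul {N : ℕ} [Nontrivial (EuclideanSpace ℝ (Fin N))]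
    {α β c r : ℝ} (hα : 0 ≤ α) (hβ : β ≤ 0) (hc : 0 ≤ c) {f : EuclideanSpace ℝ (Fin N) → ℝ}
    (hf : ∀ y : EuclideanSpace ℝ (Fin N), 1 ≤ ‖y‖ → c * ‖y‖ ^ (-(N : ℝ)) ≤ f y)
    {x : EuclideanSpace ℝ (Fin N)} (hr : 1 ≤ r) (hrx : r ≤ ‖x‖) :
    ENNReal.ofReal (3 ^ (-α) * 3 ^ β * (c / 2 * volume.real (ball (0 : EuclideanSpace ℝ (Fin N)) 1))
        * Kab α β x)
      ≤ ∫⁻ y in ball 0 (2 * r) \ closedBall 0 r, ENNReal.ofReal (Kab α β (x - y) * f y) := by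
  have hx : x ≠ 0 := norm_pos_iff.1 (by linarith)
  set b := 3 ^ (-α) * 3 ^ β * Kab α β x
  have hb : 0 ≤ b := mul_nonneg (by positivity) (Kab_nonneg x)
  have hK : ∀ᵐ y ∂volume.restrict (ball 0 (2 * r) \ closedBall 0 r),
      ENNReal.ofReal b * ENNReal.ofReal (f y) ≤ ENNReal.ofReal (Kab α β (x - y) * f y) := by
    -- `Kab α β 0` is a junk value of `rpow` at `0`, so the null set `{x}` is discarded.
    filter_upwards [ae_restrict_mem (measurableSet_ball.diff measurableSet_closedBall),
      ae_restrict_of_ae (volume.ae_ne x)] with y hy hyx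
    have hy : ‖y‖ ≤ 2 * ‖x‖ := by linarith [mem_ball_zero_iff.1 hy.1]
    rw [ENNReal.ofReal_mul (Kab_nonneg _)]
    gcongr
    exact three_rpow_mul_Kab_le_Kab_sub hα hβ hx hyx hy
  calc _ = ENNReal.ofReal b
          * (ENNReal.ofReal (c / 2) * volume (ball (0 : EuclideanSpace ℝ (Fin N)) 1)) := by
        rw [mul_right_comm, ENNReal.ofReal_mul hb, ENNReal.ofReal_mul (p := c / 2) (by positivity),
          measureReal_def, ENNReal.ofReal_toReal measure_ball_lt_top.ne]
    _ ≤ ENNReal.ofReal b * ∫⁻ y in ball 0 (2 * r) \ closedBall 0 r, ENNReal.ofReal (f y) := by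
        gcongr
        exact ofReal_mul_addHaar_ball_le_setLIntegral_shell volume hc hr (by simpa using hf)
    _ = ∫⁻ y in ball 0 (2 * r) \ closedBall 0 r, ENNReal.ofReal b * ENNReal.ofReal (f y) :=
        (lintegral_const_mul' _ _ ENNReal.ofReal_ne_top).symm
    _ ≤ _ := lintegral_mono_ae hK

theorem stmt3_general (N : ℕ) (hN : 1 ≤ N) (α β : ℝ) (hα0 : 0 ≤ α)
    (hβ0 : β ≤ 0) (f : EuclideanSpace ℝ (Fin N) → ℝ)
    (c : ℝ) (hc : 0 < c)
    (hlow : ∀ x : EuclideanSpace ℝ (Fin N), 1 ≤ ‖x‖ → c * ‖x‖ ^ (-(N : ℝ)) ≤ f x) :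
    ∃ C > 0, ∀ x : EuclideanSpace ℝ (Fin N), 1 ≤ ‖x‖ →
      ENNReal.ofReal (C * (‖x‖ ^ (-α) * (Real.log (1 + ‖x‖)) ^ (1 + β))) ≤ convKL α β f x := by
  have : Nontrivial (EuclideanSpace ℝ (Fin N)) :=
    Module.nontrivial_of_finrank_pos (R := ℝ) (by rwa [finrank_euclideanSpace_fin])
  have hv : 0 < volume.real (ball (0 : EuclideanSpace ℝ (Fin N)) 1) :=
    ENNReal.toReal_pos (measure_ball_pos _ _ one_pos).ne' measure_ball_lt_top.ne
  set κ := 3 ^ (-α) * 3 ^ β * (c / 2 * volume.real (ball (0 : EuclideanSpace ℝ (Fin N)) 1))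
  refine ⟨κ / (2 * log 2), by positivity [log_pos one_lt_two], fun x hx => ?_⟩
  obtain ⟨m, hm, hm'⟩ := exists_nat_pow_near hx one_lt_two
  calc ENNReal.ofReal (κ / (2 * log 2) * (‖x‖ ^ (-α) * log (1 + ‖x‖) ^ (1 + β)))
      ≤ ENNReal.ofReal (((m + 1 : ℕ) : ℝ) * (κ * Kab α β x)) :=
        ENNReal.ofReal_le_ofReal (div_mul_rpow_log_le_nat_mul_Kab (by positivity) hx hm')
    _ = ∑ k ∈ Finset.range (m + 1), ENNReal.ofReal (κ * Kab α β x) := by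
        rw [ENNReal.ofReal_mul (by positivity), ENNReal.ofReal_natCast, Finset.sum_const,
          Finset.card_range, nsmul_eq_mul]
    _ ≤ ∑ k ∈ Finset.range (m + 1), ∫⁻ y in ball 0 (2 * 2 ^ k) \ closedBall 0 (2 ^ k),
          ENNReal.ofReal (Kab α β (x - y) * f y) := by
        gcongr with k hk
        exact ofReal_le_setLIntegral_shell_Kab_mul hα0 hβ0 hc.le hlow (one_le_pow₀ one_le_two)
          ((pow_le_pow_right₀ one_le_two (Finset.mem_range_succ_iff.1 hk)).trans hm)
    _ ≤ convKL α β f x := sum_setLIntegral_dyadic_shells_le _ _ _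

theorem stmt3 (N : ℕ) (hN : 1 ≤ N) (α β : ℝ) (hα0 : 0 ≤ α) (hαN : α ≤ N)
    (hβ0 : β ≤ 0) (hβ : α - N < β) (f : EuclideanSpace ℝ (Fin N) → ℝ)
    (hf : LocallyIntegrable f volume) (hf0 : ∀ x, 0 ≤ f x)
    (c : ℝ) (hc : 0 < c)
    (hlow : ∀ x : EuclideanSpace ℝ (Fin N), 1 ≤ ‖x‖ → c * ‖x‖ ^ (-(N : ℝ)) ≤ f x) :
    ∃ C > 0, ∀ x : EuclideanSpace ℝ (Fin N), 1 ≤ ‖x‖ →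
      ENNReal.ofReal (C * (‖x‖ ^ (-α) * (Real.log (1 + ‖x‖)) ^ (1 + β))) ≤ convKL α β f x :=
  stmt3_general N hN α β hα0 hβ0 f c hc hlow
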